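/- With the same hypotheses, Λ([A | T_h B]) / Λ([conv(A ∪ T_h B)]) → 1 as ‖h‖ → ∞, i.e. Λ([W_h]) = Λ([A|T_h B])(1 + o(1)). -/

import Mathlib

open MeasureTheory Filter
open scoped RealInnerProductSpace Topology

/-- The space of (parametrized) affine hyperplanes of `ℝ^d`: a pair `(u, r)` of a unit
vector and a real number corresponds to the hyperplane `{x : ⟨x,u⟩ = r}`. -/
abbrev HypSp (d : ℕ) := (Metric.sphere (0 : EuclideanSpace ℝ (Fin d)) 1) × ℝ

/-- The set of hyperplanes hitting a set `K`. -/
def hits {d : ℕ} (K : Set (EuclideanSpace ℝ (Fin d))) : Set (HypSp d) :=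
  {p | ∃ x ∈ K, ⟪x, (p.1 : EuclideanSpace ℝ (Fin d))⟫ = p.2}

/-- The set of hyperplanes strictly separating the points `x` and `y`. -/
def sepPts {d : ℕ} (x y : EuclideanSpace ℝ (Fin d)) : Set (HypSp d) :=
  {p | (⟪x, (p.1 : EuclideanSpace ℝ (Fin d))⟫ - p.2) *
        (⟪y, (p.1 : EuclideanSpace ℝ (Fin d))⟫ - p.2) < 0}

/-- The set of hyperplanes strictly separating the sets `A` and `B`. -/
def sepSets {d : ℕ} (A B : Set (EuclideanSpace ℝ (Fin d))) : Set (HypSp d) :=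
  {p | ((∀ a ∈ A, ⟪a, (p.1 : EuclideanSpace ℝ (Fin d))⟫ < p.2) ∧
          ∀ b ∈ B, p.2 < ⟪b, (p.1 : EuclideanSpace ℝ (Fin d))⟫) ∨
       ((∀ b ∈ B, ⟪b, (p.1 : EuclideanSpace ℝ (Fin d))⟫ < p.2) ∧
          ∀ a ∈ A, p.2 < ⟪a, (p.1 : EuclideanSpace ℝ (Fin d))⟫)}

/-- The action of the translation `T_h` on hyperplanes. -/
noncomputable def hypTrans {d : ℕ} (h : EuclideanSpace ℝ (Fin d)) (p : HypSp d) : HypSp d :=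
  (p.1, p.2 + ⟪h, (p.1 : EuclideanSpace ℝ (Fin d))⟫)

/-- A measure on hyperplanes is translation invariant (stationary) if it is invariant
under every translation of `ℝ^d`. -/
def TransInvariant {d : ℕ} (Λ : Measure (HypSp d)) : Prop :=
  ∀ h : EuclideanSpace ℝ (Fin d), Measure.map (hypTrans h) Λ = Λ

/-- A measure on hyperplanes is locally finite if the set of hyperplanes hitting any
compact set has finite measure. -/
def LocFiniteHyp {d : ℕ} (Λ : Measure (HypSp d)) : Prop :=
  ∀ K : Set (EuclideanSpace ℝ (Fin d)), IsCompact K → Λ (hits K) ≠ ⊤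

/-!
Every hyperplane hitting `W_h = conv (A ∪ (B + h))` either separates `A` from `B + h` or hits
`conv A` or `conv B + h`; by translation invariance this gives
`0 ≤ Λ[W_h] - Λ[A | B + h] ≤ Λ[conv A] + Λ[conv B]`, uniformly in `h`. On the other hand `[W_h]`
contains `[a | b + h]` for `a ∈ A`, `b ∈ B`, and cutting the segment from `a` to `b + h` into
`⌊‖b + h - a‖⌋` consecutive unit pieces gives as many disjoint translates of some `[0 | u]` with
`‖u‖ = 1` inside it, each of measure at least `κ`. Hence `Λ[W_h]` grows linearly in `‖h‖` and the
ratio tends to `1`.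
-/

open scoped ENNReal

lemma ENNReal.abs_toReal_sub_toReal_le {a b c : ℝ≥0∞} (hab : a ≤ b) (hba : b ≤ a + c)
    (hb : b ≠ ⊤) (hc : c ≠ ⊤) : |a.toReal - b.toReal| ≤ c.toReal := by
  have ha : a ≠ ⊤ := ne_top_of_le_ne_top hb hab
  have hba' := ENNReal.toReal_mono (ENNReal.add_ne_top.mpr ⟨ha, hc⟩) hba
  rw [ENNReal.toReal_add ha hc] at hba'
  rw [abs_sub_comm, abs_of_nonneg (sub_nonneg.mpr (ENNReal.toReal_mono hb hab))]
  linarith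

lemma tendsto_div_nhds_one_of_abs_sub_le {α : Type*} {l : Filter α} {f g : α → ℝ} (C : ℝ)
    (hfg : ∀ᶠ x in l, |f x - g x| ≤ C) (hg : Tendsto g l atTop) :
    Tendsto (fun x => f x / g x) l (𝓝 1) := by
  have hbig : (f - g) =O[l] fun _ => (1 : ℝ) :=
    Asymptotics.IsBigO.of_bound C (hfg.mono fun x hx => by simpa using hx)
  have hequiv : Asymptotics.IsEquivalent l f g :=
    hbig.trans_isLittleO ((Asymptotics.isLittleO_one_left_iff ℝ).mpr
      (tendsto_norm_atTop_atTop.comp hg))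
  exact (Asymptotics.isEquivalent_iff_tendsto_one (hg.eventually_ne_atTop 0)).mp hequiv

section Hyperplanes

variable {d : ℕ}

local notation "E" => EuclideanSpace ℝ (Fin d)

lemma hits_mono {K L : Set E} (h : K ⊆ L) : hits K ⊆ hits L := by
  rintro p ⟨x, hx, hxp⟩
  exact ⟨x, h hx, hxp⟩

lemma mem_sepPts {x y : E} {p : HypSp d} :
    p ∈ sepPts x y ↔ (⟪x, (p.1 : E)⟫ - p.2) * (⟪y, (p.1 : E)⟫ - p.2) < 0 :=
  Iff.rfl

lemma IsPreconnected.mem_hits {K : Set E} (hK : IsPreconnected K) {x y : E} (hx : x ∈ K)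
    (hy : y ∈ K) {p : HypSp d} (hxp : ⟪x, (p.1 : E)⟫ ≤ p.2) (hyp : p.2 ≤ ⟪y, (p.1 : E)⟫) :
    p ∈ hits K :=
  hK.intermediate_value hx hy (continuous_id.inner continuous_const).continuousOn ⟨hxp, hyp⟩

lemma sepPts_subset_hits_segment (x y : E) : sepPts x y ⊆ hits (segment ℝ x y) := by
  intro p hp
  have hseg : IsPreconnected (segment ℝ x y) := (convex_segment x y).isPreconnected
  rcases mul_neg_iff.mp (mem_sepPts.mp hp) with ⟨hx, hy⟩ | ⟨hx, hy⟩
  · exact hseg.mem_hits (right_mem_segment ℝ x y) (left_mem_segment ℝ x y)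
      (by linarith) (by linarith)
  · exact hseg.mem_hits (left_mem_segment ℝ x y) (right_mem_segment ℝ x y)
      (by linarith) (by linarith)

lemma sepSets_subset_hits_convexHull {A B : Set E} (hA : A.Nonempty) (hB : B.Nonempty) :
    sepSets A B ⊆ hits (convexHull ℝ (A ∪ B)) := by
  obtain ⟨a, ha⟩ := hA
  obtain ⟨b, hb⟩ := hB
  have hhull : IsPreconnected (convexHull ℝ (A ∪ B)) := (convex_convexHull ℝ _).isPreconnected
  have ha' : a ∈ convexHull ℝ (A ∪ B) := subset_convexHull ℝ _ (Or.inl ha)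
  have hb' : b ∈ convexHull ℝ (A ∪ B) := subset_convexHull ℝ _ (Or.inr hb)
  rintro p (⟨hA, hB⟩ | ⟨hB, hA⟩)
  · exact hhull.mem_hits ha' hb' (hA a ha).le (hB b hb).le
  · exact hhull.mem_hits hb' ha' (hB b hb).le (hA a ha).le

lemma IsPreconnected.forall_lt_or_forall_gt_of_notMem_hits {K : Set E} (hK : IsPreconnected K)
    {p : HypSp d} (hp : p ∉ hits K) :
    (∀ x ∈ K, ⟪x, (p.1 : E)⟫ < p.2) ∨ ∀ x ∈ K, p.2 < ⟪x, (p.1 : E)⟫ := by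
  by_contra! ⟨⟨x, hx, hxp⟩, y, hy, hyp⟩
  exact hp (hK.mem_hits hy hx hyp hxp)

lemma notMem_hits_convexHull {S : Set E} {p : HypSp d}
    (hS : (∀ x ∈ S, ⟪x, (p.1 : E)⟫ < p.2) ∨ ∀ x ∈ S, p.2 < ⟪x, (p.1 : E)⟫) :
    p ∉ hits (convexHull ℝ S) := by
  have hlin : IsLinearMap ℝ fun x : E => ⟪x, (p.1 : E)⟫ :=
    ⟨fun x y => inner_add_left x y _, fun c x => real_inner_smul_left x _ c⟩
  rintro ⟨z, hz, hzp⟩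
  rcases hS with hS | hS
  · exact ne_of_lt (convexHull_min hS (convex_halfSpace_lt hlin p.2) hz) hzp
  · exact ne_of_gt (convexHull_min hS (convex_halfSpace_gt hlin p.2) hz) hzp

lemma hits_convexHull_union_subset {A B P Q : Set E} (hAP : A ⊆ P) (hBQ : B ⊆ Q)
    (hP : IsPreconnected P) (hQ : IsPreconnected Q) :
    hits (convexHull ℝ (A ∪ B)) ⊆ sepSets A B ∪ hits P ∪ hits Q := by
  intro p hp
  by_contra! hnot
  simp only [Set.mem_union, not_or] at hnot
  obtain ⟨⟨hsep, hPp⟩, hQp⟩ := hnot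
  refine notMem_hits_convexHull ?_ hp
  rcases hP.forall_lt_or_forall_gt_of_notMem_hits hPp with hPl | hPg <;>
    rcases hQ.forall_lt_or_forall_gt_of_notMem_hits hQp with hQl | hQg
  · exact Or.inl fun x hx => hx.elim (fun hx => hPl x (hAP hx)) fun hx => hQl x (hBQ hx)
  · exact (hsep (Or.inl ⟨fun a ha => hPl a (hAP ha), fun b hb => hQg b (hBQ hb)⟩)).elim
  · exact (hsep (Or.inr ⟨fun b hb => hQl b (hBQ hb), fun a ha => hPg a (hAP ha)⟩)).elim
  · exact Or.inr fun x hx => hx.elim (fun hx => hPg x (hAP hx)) fun hx => hQg x (hBQ hx)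

lemma isOpen_sepPts (x y : E) : IsOpen (sepPts x y) :=
  isOpen_lt (by fun_prop) continuous_const

lemma sepPts_comm (x y : E) : sepPts x y = sepPts y x := by
  ext p
  simp only [mem_sepPts, mul_comm]

lemma exists_inner_sub_eq_of_mem_segment {x y z : E} (hz : z ∈ segment ℝ x y) (p : HypSp d) :
    ∃ a b : ℝ, 0 ≤ a ∧ 0 ≤ b ∧ a + b = 1 ∧
      ⟪z, (p.1 : E)⟫ - p.2 = a * (⟪x, (p.1 : E)⟫ - p.2) + b * (⟪y, (p.1 : E)⟫ - p.2) := by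
  obtain ⟨a, b, ha, hb, hab, rfl⟩ := hz
  refine ⟨a, b, ha, hb, hab, ?_⟩
  rw [inner_add_left, real_inner_smul_left, real_inner_smul_left]
  linear_combination p.2 * hab

lemma sepPts_subset_sepPts_of_mem_segment {x y z : E} (hz : z ∈ segment ℝ x y) :
    sepPts x z ⊆ sepPts x y := by
  intro p hp
  obtain ⟨a, b, ha, hb, -, hzp⟩ := exists_inner_sub_eq_of_mem_segment hz p
  rw [mem_sepPts, hzp] at hp
  rw [mem_sepPts]
  nlinarith [mul_nonneg ha (sq_nonneg (⟪x, (p.1 : E)⟫ - p.2))]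

lemma disjoint_sepPts_of_mem_segment {x y z : E} (hz : z ∈ segment ℝ x y) :
    Disjoint (sepPts x z) (sepPts z y) := by
  refine Set.disjoint_left.mpr fun p hxz hzy => ?_
  obtain ⟨a, b, ha, hb, hab, hzp⟩ := exists_inner_sub_eq_of_mem_segment hz p
  rw [mem_sepPts] at hxz hzy
  have hsq : (⟪z, (p.1 : E)⟫ - p.2) * (⟪z, (p.1 : E)⟫ - p.2) =
      a * ((⟪x, (p.1 : E)⟫ - p.2) * (⟪z, (p.1 : E)⟫ - p.2)) +
        b * ((⟪z, (p.1 : E)⟫ - p.2) * (⟪y, (p.1 : E)⟫ - p.2)) := by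
    linear_combination (⟪z, (p.1 : E)⟫ - p.2) * hzp
  rcases ha.eq_or_lt with rfl | ha
  · obtain rfl : b = 1 := by linarith
    nlinarith
  · nlinarith [mul_neg_of_pos_of_neg ha hxz, mul_nonpos_of_nonneg_of_nonpos hb hzy.le,
      mul_self_nonneg (⟪z, (p.1 : E)⟫ - p.2)]

lemma add_smul_mem_segment (x u : E) {s t : ℝ} (hs : 0 ≤ s) (hst : s ≤ t) :
    x + s • u ∈ segment ℝ x (x + t • u) := by
  rcases hs.eq_or_lt with rfl | hs
  · simpa using left_mem_segment ℝ x (x + t • u)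
  rw [segment_eq_image']
  refine ⟨s / t, ⟨div_nonneg hs.le (by linarith), div_le_one_of_le₀ hst (by linarith)⟩, ?_⟩
  dsimp only
  rw [add_sub_cancel_left, smul_smul, div_mul_cancel₀ _ (by linarith)]

lemma continuous_hypTrans (h : E) : Continuous (hypTrans h) :=
  continuous_fst.prodMk
    (continuous_snd.add (continuous_const.inner (continuous_subtype_val.comp continuous_fst)))

@[simp]
lemma hypTrans_hypTrans_neg (h : E) (p : HypSp d) : hypTrans h (hypTrans (-h) p) = p := by
  simp [hypTrans, inner_neg_left]

lemma hits_image_add_right (h : E) (K : Set E) :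
    hits ((· + h) '' K) = hypTrans (-h) ⁻¹' hits K := by
  ext p
  simp only [hits, hypTrans, Set.mem_preimage, Set.mem_ofPred_eq, Set.exists_mem_image,
    inner_add_left, inner_neg_left]
  refine exists_congr fun x => and_congr_right fun _ => ?_
  constructor <;> intro h <;> linarith

lemma sepPts_add_right (x y v : E) :
    sepPts (x + v) (y + v) = hypTrans (-v) ⁻¹' sepPts x y := by
  ext p
  simp only [Set.mem_preimage, mem_sepPts, hypTrans, inner_add_left, inner_neg_left]
  ring_nf

variable {Λ : Measure (HypSp d)}

lemma measure_sepPts_add_le {x y z : E} (hz : z ∈ segment ℝ x y) :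
    Λ (sepPts x z) + Λ (sepPts z y) ≤ Λ (sepPts x y) := by
  rw [← measure_union (disjoint_sepPts_of_mem_segment hz) (isOpen_sepPts z y).measurableSet]
  refine measure_mono (Set.union_subset (sepPts_subset_sepPts_of_mem_segment hz) ?_)
  rw [sepPts_comm z, sepPts_comm x]
  exact sepPts_subset_sepPts_of_mem_segment (segment_symm ℝ x y ▸ hz)

lemma TransInvariant.measure_preimage_hypTrans (hinv : TransInvariant Λ) (h : E)
    (S : Set (HypSp d)) : Λ (hypTrans h ⁻¹' S) = Λ S := by
  have hle : ∀ (g : E) (T : Set (HypSp d)), Λ (hypTrans g ⁻¹' T) ≤ Λ T := fun g T =>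
    (Measure.le_map_apply (continuous_hypTrans g).aemeasurable T).trans_eq (by rw [hinv g])
  refine le_antisymm (hle h S) ?_
  calc Λ S = Λ (hypTrans (-h) ⁻¹' (hypTrans h ⁻¹' S)) := by
        congr 1; ext p; simp
    _ ≤ Λ (hypTrans h ⁻¹' S) := hle (-h) _

lemma TransInvariant.measure_hits_image_add_right (hinv : TransInvariant Λ) (h : E)
    (K : Set E) : Λ (hits ((· + h) '' K)) = Λ (hits K) := by
  rw [hits_image_add_right, hinv.measure_preimage_hypTrans]

lemma TransInvariant.measure_sepPts_add_right (hinv : TransInvariant Λ) (x y v : E) :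
    Λ (sepPts (x + v) (y + v)) = Λ (sepPts x y) := by
  rw [sepPts_add_right, hinv.measure_preimage_hypTrans]

lemma LocFiniteHyp.measure_hits_ne_top (hfin : LocFiniteHyp Λ) {K : Set E}
    (hK : Bornology.IsBounded K) : Λ (hits K) ≠ ⊤ := by
  obtain ⟨R, hR⟩ := hK.subset_closedBall 0
  exact ne_top_of_le_ne_top (hfin _ (isCompact_closedBall 0 R)) (measure_mono (hits_mono hR))

lemma LocFiniteHyp.measure_sepPts_ne_top (hfin : LocFiniteHyp Λ) (x y : E) :
    Λ (sepPts x y) ≠ ⊤ := by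
  have hseg : IsCompact (segment ℝ x y) := by
    rw [← convexHull_pair]; exact (Set.toFinite _).isCompact_convexHull ℝ
  exact ne_top_of_le_ne_top (hfin _ hseg) (measure_mono (sepPts_subset_hits_segment x y))

lemma TransInvariant.natCast_mul_measure_sepPts_le (hinv : TransInvariant Λ) (x u : E) (n : ℕ) :
    n * Λ (sepPts x (x + u)) ≤ Λ (sepPts x (x + (n : ℝ) • u)) := by
  induction n with
  | zero => simp
  | succ n ih =>
    have hmid : x + (n : ℝ) • u ∈ segment ℝ x (x + ((n + 1 : ℕ) : ℝ) • u) :=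
      add_smul_mem_segment x u n.cast_nonneg (by push_cast; linarith)
    have hstep : Λ (sepPts (x + (n : ℝ) • u) (x + ((n + 1 : ℕ) : ℝ) • u)) =
        Λ (sepPts x (x + u)) := by
      rw [← hinv.measure_sepPts_add_right x (x + u) ((n : ℝ) • u)]
      congr 2
      push_cast
      rw [add_smul, one_smul]
      ac_rfl
    calc ((n + 1 : ℕ) : ℝ≥0∞) * Λ (sepPts x (x + u))
        = n * Λ (sepPts x (x + u)) + Λ (sepPts x (x + u)) := by push_cast; ring
      _ ≤ Λ (sepPts x (x + (n : ℝ) • u)) +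
            Λ (sepPts (x + (n : ℝ) • u) (x + ((n + 1 : ℕ) : ℝ) • u)) := by
        rw [hstep]; gcongr
      _ ≤ _ := measure_sepPts_add_le hmid

lemma TransInvariant.le_toReal_measure_sepPts (hinv : TransInvariant Λ) (hfin : LocFiniteHyp Λ)
    {κ : ℝ} (hκ0 : 0 ≤ κ) (hκ : ∀ u : E, ‖u‖ = 1 → κ ≤ (Λ (sepPts 0 u)).toReal) (x y : E) :
    κ * (‖y - x‖ - 1) ≤ (Λ (sepPts x y)).toReal := by
  set v := y - x
  rcases eq_or_ne v 0 with hv | hv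
  · rw [hv, norm_zero]
    nlinarith [ENNReal.toReal_nonneg (a := Λ (sepPts x y))]
  set u := ‖v‖⁻¹ • v
  have hu : ‖u‖ = 1 := norm_smul_inv_norm hv
  have hy : y = x + ‖v‖ • u := by
    rw [smul_inv_smul₀ (norm_ne_zero_iff.mpr hv)]
    exact (add_sub_cancel x y).symm
  set n := ⌊‖v‖⌋₊
  have hstack : (n : ℝ≥0∞) * Λ (sepPts 0 u) ≤ Λ (sepPts x y) := calc
    (n : ℝ≥0∞) * Λ (sepPts 0 u) = n * Λ (sepPts x (x + u)) := by
      rw [← hinv.measure_sepPts_add_right 0 u x, zero_add, add_comm u x]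
    _ ≤ Λ (sepPts x (x + (n : ℝ) • u)) := hinv.natCast_mul_measure_sepPts_le x u n
    _ ≤ Λ (sepPts x y) := by
      refine measure_mono (hy ▸ sepPts_subset_sepPts_of_mem_segment ?_)
      exact add_smul_mem_segment x u n.cast_nonneg (Nat.floor_le (norm_nonneg v))
  have hstack' := ENNReal.toReal_mono (hfin.measure_sepPts_ne_top x y) hstack
  rw [ENNReal.toReal_mul, ENNReal.toReal_natCast] at hstack'
  calc κ * (‖v‖ - 1) ≤ κ * n :=
        mul_le_mul_of_nonneg_left (by linarith [Nat.lt_floor_add_one ‖v‖]) hκ0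
    _ ≤ n * (Λ (sepPts 0 u)).toReal := by
        rw [mul_comm]; exact mul_le_mul_of_nonneg_left (hκ u hu) n.cast_nonneg
    _ ≤ _ := hstack'

lemma TransInvariant.measure_hits_convexHull_union_le (hinv : TransInvariant Λ) (A B : Set E)
    (h : E) :
    Λ (hits (convexHull ℝ (A ∪ (· + h) '' B))) ≤
      Λ (sepSets A ((· + h) '' B)) + (Λ (hits (convexHull ℝ A)) + Λ (hits (convexHull ℝ B))) := by
  have hQ : IsPreconnected ((· + h) '' convexHull ℝ B) :=
    (convex_convexHull ℝ B).isPreconnected.image _ (continuous_add_const h).continuousOn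
  calc Λ (hits (convexHull ℝ (A ∪ (· + h) '' B)))
      ≤ Λ (sepSets A ((· + h) '' B) ∪ hits (convexHull ℝ A) ∪ hits ((· + h) '' convexHull ℝ B)) :=
        measure_mono <| hits_convexHull_union_subset (subset_convexHull ℝ A)
          (Set.image_mono (subset_convexHull ℝ B)) (convex_convexHull ℝ A).isPreconnected hQ
    _ ≤ Λ (sepSets A ((· + h) '' B)) + Λ (hits (convexHull ℝ A)) +
          Λ (hits ((· + h) '' convexHull ℝ B)) :=
        (measure_union_le _ _).trans (add_le_add_left (measure_union_le _ _) _)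
    _ = _ := by rw [hinv.measure_hits_image_add_right, add_assoc]

end Hyperplanes

/-- Under the same hypotheses as Statement 10,
`Λ([A | T_h B]) / Λ([conv(A ∪ T_h B)]) → 1` as `‖h‖ → ∞`. -/
theorem stmt11 {d : ℕ} (Λ : Measure (HypSp d))
    (hinv : TransInvariant Λ) (hfin : LocFiniteHyp Λ)
    (A B : Set (EuclideanSpace ℝ (Fin d))) (hA : IsCompact A) (hB : IsCompact B)
    (hAne : A.Nonempty) (hBne : B.Nonempty)
    (κ : ℝ) (hκpos : 0 < κ)
    (hκ : ∀ u : EuclideanSpace ℝ (Fin d), ‖u‖ = 1 → κ ≤ (Λ (sepPts 0 u)).toReal) :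
    Tendsto (fun h : EuclideanSpace ℝ (Fin d) =>
        (Λ (sepSets A ((· + h) '' B))).toReal
          / (Λ (hits (convexHull ℝ (A ∪ (· + h) '' B)))).toReal)
      (Bornology.cobounded (EuclideanSpace ℝ (Fin d))) (𝓝 1) := by
  obtain ⟨a, ha⟩ := hAne
  obtain ⟨b, hb⟩ := hBne
  have hW : ∀ h, Λ (hits (convexHull ℝ (A ∪ (· + h) '' B))) ≠ ⊤ := fun h =>
    hfin.measure_hits_ne_top <| isBounded_convexHull.mpr <|
      hA.isBounded.union (hB.image (continuous_add_const h)).isBounded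
  have hC : Λ (hits (convexHull ℝ A)) + Λ (hits (convexHull ℝ B)) ≠ ⊤ :=
    ENNReal.add_ne_top.mpr ⟨hfin.measure_hits_ne_top (isBounded_convexHull.mpr hA.isBounded),
      hfin.measure_hits_ne_top (isBounded_convexHull.mpr hB.isBounded)⟩
  refine tendsto_div_nhds_one_of_abs_sub_le _ (Eventually.of_forall fun h =>
    ENNReal.abs_toReal_sub_toReal_le
      (measure_mono (sepSets_subset_hits_convexHull ⟨a, ha⟩ ⟨b + h, b, hb, rfl⟩))
      (hinv.measure_hits_convexHull_union_le A B h) (hW h) hC) ?_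
  refine tendsto_atTop_mono (fun h => ?_) <| Tendsto.const_mul_atTop hκpos <|
    tendsto_atTop_add_const_right _ (-(‖b - a‖ + 1)) tendsto_norm_cobounded_atTop
  have hnorm : ‖h‖ ≤ ‖b + h - a‖ + ‖b - a‖ := by
    simpa [show b + h - a - (b - a) = h by abel] using norm_sub_le (b + h - a) (b - a)
  calc κ * (‖h‖ + -(‖b - a‖ + 1)) ≤ κ * (‖b + h - a‖ - 1) := by gcongr; linarith
    _ ≤ (Λ (sepPts a (b + h))).toReal := hinv.le_toReal_measure_sepPts hfin hκpos.le hκ a (b + h)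
    _ ≤ _ := ENNReal.toReal_mono (hW h) <| measure_mono <|
        (sepPts_subset_hits_segment a (b + h)).trans <| hits_mono <|
          segment_subset_convexHull (Or.inl ha) (Or.inr ⟨b, hb, rfl⟩)
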